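/- Let f : (a,b) → ℝ be continuous and suppose there exists λ > 0 such that for every x ∈ (a,b), liminf_{r→0⁺} (f(x+r) + f(x−r) − 2f(x))/r² ≥ λ. Then f is convex on (a,b); in fact f(x) − (λ/2)x² · (1/2) is midpoint-convex and f is strictly convex. -/

import Mathlib

open Filter

private lemma stmt12_key (a b lam c : ℝ) (hc : 0 ≤ c) (hcl : 2 * c < lam)
    (f : ℝ → ℝ) (hf : ContinuousOn f (Set.Ioo a b))
    (h : ∀ x ∈ Set.Ioo a b,
      lam ≤ liminf (fun r => (f (x + r) + f (x - r) - 2 * f x) / r ^ 2)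
        (nhdsWithin 0 (Set.Ioi 0))) :
    ConvexOn ℝ (Set.Ioo a b) (fun x => f x - c * x ^ 2) := by
  set g : ℝ → ℝ := fun x => f x - c * x ^ 2 with hgdef
  have hgc : ContinuousOn g (Set.Ioo a b) := by
    apply hf.sub
    fun_prop
  have main : ∀ x ∈ Set.Ioo a b, ∀ y ∈ Set.Ioo a b, x < y →
      ∀ z ∈ Set.Icc x y, g z ≤ g x + (g y - g x) / (y - x) * (z - x) := by
    intro x hx y hy hxy
    set s : ℝ := (g y - g x) / (y - x) with hs
    set h0 : ℝ → ℝ := fun z => g z - g x - s * (z - x) with hh0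
    have hsub : Set.Icc x y ⊆ Set.Ioo a b := Set.Icc_subset_Ioo hx.1 hy.2
    have hcont : ContinuousOn h0 (Set.Icc x y) := by
      apply ((hgc.mono hsub).sub continuousOn_const).sub
      fun_prop
    obtain ⟨x₀, hx₀m, hmax⟩ :=
      isCompact_Icc.exists_isMaxOn (Set.nonempty_Icc.2 hxy.le) hcont
    have hne : y - x ≠ 0 := sub_ne_zero.2 hxy.ne'
    have hx0 : h0 x = 0 := by simp [hh0]
    have hy0 : h0 y = 0 := by
      simp only [hh0, hs]
      field_simp
      ring
    have hmax0 : h0 x₀ ≤ 0 := by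
      by_contra hpos
      push_neg at hpos
      have hxne : x₀ ≠ x := by intro e; rw [e, hx0] at hpos; exact lt_irrefl 0 hpos
      have hyne : x₀ ≠ y := by intro e; rw [e, hy0] at hpos; exact lt_irrefl 0 hpos
      have hx₀i : x₀ ∈ Set.Ioo x y :=
        ⟨lt_of_le_of_ne hx₀m.1 (Ne.symm hxne), lt_of_le_of_ne hx₀m.2 hyne⟩
      have hx₀ab : x₀ ∈ Set.Ioo a b := hsub hx₀m
      set δ : ℝ := min (x₀ - x) (y - x₀) with hδ
      have hδpos : 0 < δ := lt_min (by linarith [hx₀i.1]) (by linarith [hx₀i.2])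
      have hev : ∀ᶠ r in nhdsWithin 0 (Set.Ioi 0),
          (f (x₀ + r) + f (x₀ - r) - 2 * f x₀) / r ^ 2 ≤ 2 * c := by
        have hmem : Set.Ioo 0 δ ∈ nhdsWithin 0 (Set.Ioi 0) :=
          Ioo_mem_nhdsGT_of_mem ⟨le_refl 0, hδpos⟩
        filter_upwards [hmem] with r hr
        have hr1 : r < x₀ - x := lt_of_lt_of_le hr.2 (min_le_left _ _)
        have hr2 : r < y - x₀ := lt_of_lt_of_le hr.2 (min_le_right _ _)
        have h1 : x₀ + r ∈ Set.Icc x y := ⟨by linarith [hr.1, hx₀i.1], by linarith⟩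
        have h2 : x₀ - r ∈ Set.Icc x y := ⟨by linarith, by linarith [hr.1, hx₀i.2]⟩
        have e1 : h0 (x₀ + r) ≤ h0 x₀ := hmax h1
        have e2 : h0 (x₀ - r) ≤ h0 x₀ := hmax h2
        have key : f (x₀ + r) + f (x₀ - r) - 2 * f x₀ ≤ 2 * c * r ^ 2 := by
          have eq1 : f (x₀ + r) + f (x₀ - r) - 2 * f x₀ =
              (h0 (x₀ + r) - h0 x₀) + (h0 (x₀ - r) - h0 x₀) + 2 * c * r ^ 2 := by
            simp only [hh0, hgdef]
            ring
          linarith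
        rw [div_le_iff₀ (pow_pos hr.1 2)]
        linarith
      have hli := h x₀ hx₀ab
      have hle : liminf (fun r => (f (x₀ + r) + f (x₀ - r) - 2 * f x₀) / r ^ 2)
          (nhdsWithin 0 (Set.Ioi 0)) ≤ 2 * c := by
        rw [liminf_eq]
        apply Real.sSup_le _ (by linarith)
        intro z hz
        simp only [Set.mem_setOf_eq] at hz
        obtain ⟨r, hr1, hr2⟩ := (hz.and hev).exists
        linarith
      linarith
    intro z hz
    have := hmax hz
    simp only [hh0, Set.mem_setOf_eq] at this hmax0
    linarith
  have core : ∀ x ∈ Set.Ioo a b, ∀ y ∈ Set.Ioo a b, x < y →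
      ∀ t u : ℝ, 0 ≤ t → 0 ≤ u → t + u = 1 →
        g (t * x + u * y) ≤ t * g x + u * g y := by
    intro x hx y hy hxy t u ht hu htu
    have hne : y - x ≠ 0 := sub_ne_zero.2 hxy.ne'
    have hzx : (t * x + u * y) - x = u * (y - x) := by linear_combination x * htu
    have hzy : y - (t * x + u * y) = t * (y - x) := by linear_combination (-y) * htu
    have hz : t * x + u * y ∈ Set.Icc x y := by
      constructor
      · linarith [mul_nonneg hu (sub_nonneg.2 hxy.le), hzx]
      · linarith [mul_nonneg ht (sub_nonneg.2 hxy.le), hzy]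
    have hmain := main x hx y hy hxy _ hz
    rw [hzx] at hmain
    have : (g y - g x) / (y - x) * (u * (y - x)) = u * (g y - g x) := by
      field_simp
    rw [this] at hmain
    have ht' : t = 1 - u := by linarith
    subst ht'
    linarith
  constructor
  · exact convex_Ioo a b
  · intro x hx y hy t u ht hu htu
    simp only [smul_eq_mul]
    rcases lt_trichotomy x y with hlt | heq | hgt
    · exact core x hx y hy hlt t u ht hu htu
    · subst heq
      have : t * x + u * x = x := by linear_combination x * htu
      rw [this]
      have e2 : t * g x + u * g x = g x := by linear_combination g x * htu
      linarith
    · have := core y hy x hx hgt u t hu ht (by linarith)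
      calc g (t * x + u * y) = g (u * y + t * x) := by ring_nf
        _ ≤ u * g y + t * g x := this
        _ = t * g x + u * g y := by ring

private lemma stmt12_smul_strict {s : Set ℝ} {f : ℝ → ℝ} (c : ℝ) (hc : 0 < c)
    (h : StrictConvexOn ℝ s f) : StrictConvexOn ℝ s (fun x => c * f x) := by
  refine ⟨h.1, fun x hx y hy hxy t u ht hu htu => ?_⟩
  have := h.2 hx hy hxy ht hu htu
  simp only [smul_eq_mul] at this ⊢
  nlinarith

theorem stmt_12 (a b lam : ℝ) (hlam : 0 < lam) (f : ℝ → ℝ)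
    (hf : ContinuousOn f (Set.Ioo a b))
    (h : ∀ x ∈ Set.Ioo a b,
      lam ≤ liminf (fun r => (f (x + r) + f (x - r) - 2 * f x) / r ^ 2)
        (nhdsWithin 0 (Set.Ioi 0))) :
    ConvexOn ℝ (Set.Ioo a b) f ∧
    (∀ x ∈ Set.Ioo a b, ∀ y ∈ Set.Ioo a b,
      f ((x + y) / 2) - lam / 2 * ((x + y) / 2) ^ 2 * (1 / 2) ≤
        ((f x - lam / 2 * x ^ 2 * (1 / 2)) + (f y - lam / 2 * y ^ 2 * (1 / 2))) / 2) ∧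
    StrictConvexOn ℝ (Set.Ioo a b) f := by
  have h1 : ConvexOn ℝ (Set.Ioo a b) (fun x => f x - 0 * x ^ 2) :=
    stmt12_key a b lam 0 le_rfl (by linarith) f hf h
  have h2 : ConvexOn ℝ (Set.Ioo a b) (fun x => f x - lam / 4 * x ^ 2) :=
    stmt12_key a b lam (lam / 4) (by linarith) (by linarith) f hf h
  have hfconv : ConvexOn ℝ (Set.Ioo a b) f := by
    have : (fun x => f x - 0 * x ^ 2) = f := by funext x; ring
    rwa [this] at h1
  refine ⟨hfconv, ?_, ?_⟩
  · intro x hx y hy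
    have hmid := h2.2 hx hy (by norm_num : (0:ℝ) ≤ 1/2) (by norm_num : (0:ℝ) ≤ 1/2)
      (by norm_num : (1:ℝ)/2 + 1/2 = 1)
    simp only [smul_eq_mul] at hmid
    have e : (x + y) / 2 = 1/2 * x + 1/2 * y := by ring
    rw [e]
    nlinarith [hmid]
  · have hsq : StrictConvexOn ℝ Set.univ (fun x : ℝ => x ^ 2) :=
      Even.strictConvexOn_pow (by norm_num) (by norm_num)
    have hsq' : StrictConvexOn ℝ (Set.Ioo a b) (fun x : ℝ => lam / 4 * x ^ 2) :=
      (stmt12_smul_strict (lam / 4) (by linarith) hsq).subset (Set.subset_univ _)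
        (convex_Ioo a b)
    have := h2.add_strictConvexOn hsq'
    have heq : ((fun x => f x - lam / 4 * x ^ 2) + fun x : ℝ => lam / 4 * x ^ 2) = f := by
      funext x
      simp only [Pi.add_apply]
      ring
    rwa [heq] at this
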